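/- arXiv:1708.02786 — 2 statements merged into one kernel-verified Lean document; each statement's English description precedes it below -/
import Mathlib

section
/- Let Θ_R be the randomised statistic built from i.i.d. ξ_1,…,ξ_R with CDF G and a deterministic positive scaling φ_R. Then there is a finite constant C₀, depending only on the density bound of G, on G(0), and on the first two absolute moments of F, such that |E(Θ_R) − 1| ≤ C₀ ( R φ_R^{-2} + φ_R^{-1} ) for every R and every φ_R > 0. -/
open MeasureTheory Filter ProbabilityTheory

/-- The randomised statistic
`Θ_R = ∫ | R^{-1/2} Σ_{j=1}^R (1{ξ_j ≤ u/φ_R} − G(0)) / √(G(0)(1−G(0))) |² dF(u)`. -/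
noncomputable def randStat {Ω₁ : Type*} (ξ : ℕ → Ω₁ → ℝ) (Rn : ℕ) (G0 : ℝ)
    (F : Measure ℝ) (φ : ℝ) (ω₁ : Ω₁) : ℝ :=
  ∫ u, ((∑ j ∈ Finset.range Rn, ((if ξ j ω₁ ≤ u / φ then (1 : ℝ) else 0) - G0)) /
      (Real.sqrt Rn * Real.sqrt (G0 * (1 - G0)))) ^ 2 ∂F

/-- `γ` has a density (w.r.t. Lebesgue measure) bounded by `mG`. -/
def HasBoundedDensity (γ : Measure ℝ) (mG : ℝ) : Prop :=
  ∃ d : ℝ → ℝ, (∀ x, 0 ≤ d x ∧ d x ≤ mG) ∧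
    γ = (volume : Measure ℝ).withDensity fun x => ENNReal.ofReal (d x)

/-! For fixed `u`, the sum `∑ⱼ (1{ξⱼ ≤ u/φ} - G(0))` of i.i.d. terms has mean `R (p - G(0))`
and variance `R p (1 - p)`, where `p = G(u/φ)`; by Fubini,
`E Θ_R = ∫ (p (1 - p) + R (p - G(0))²) / (G(0) (1 - G(0))) dF(u)`. A bounded density makes `G`
`m_G`-Lipschitz, so `|p - G(0)| ≤ m_G |u| / φ`, while `|p (1 - p) - G(0) (1 - G(0))| ≤ |p - G(0)|`.
Integrating against `F` gives the bound with
`C₀ = (m_G ∫|u| dF + m_G² ∫u² dF) / (G(0) (1 - G(0)))`. -/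

open Set

/-- The mean over `ξ` of the integrand of `randStat` at `u = φ t`: variance plus squared bias of
the centred indicator sum, divided by `R G(0) (1 - G(0))`. -/
noncomputable def secondMomentRatio (γ : Measure ℝ) (G0 : ℝ) (R : ℕ) (t : ℝ) : ℝ :=
  (cdf γ t * (1 - cdf γ t) + R * (cdf γ t - G0) ^ 2) / (G0 * (1 - G0))

lemma abs_mul_one_sub_sub_mul_one_sub_le {p q : ℝ} (hp0 : 0 ≤ p) (hp1 : p ≤ 1) (hq0 : 0 ≤ q)
    (hq1 : q ≤ 1) : |p * (1 - p) - q * (1 - q)| ≤ |p - q| := by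
  rw [show p * (1 - p) - q * (1 - q) = (p - q) * (1 - p - q) by ring, abs_mul]
  exact mul_le_of_le_one_right (abs_nonneg _) (abs_le.2 ⟨by linarith, by linarith⟩)

namespace HasBoundedDensity

variable {γ : Measure ℝ} {mG : ℝ}

lemma nonneg (hγ : HasBoundedDensity γ mG) : 0 ≤ mG := by
  obtain ⟨d, hd, -⟩ := hγ
  exact (hd 0).1.trans (hd 0).2

lemma measure_le (hγ : HasBoundedDensity γ mG) {s : Set ℝ} (hs : MeasurableSet s) :
    γ s ≤ ENNReal.ofReal mG * volume s := by
  obtain ⟨d, hd, rfl⟩ := hγ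
  rw [withDensity_apply _ hs, ← setLIntegral_const]
  exact lintegral_mono fun x => ENNReal.ofReal_le_ofReal (hd x).2

variable [IsProbabilityMeasure γ]

lemma cdf_sub_cdf_le (hγ : HasBoundedDensity γ mG) {x y : ℝ} (hxy : x ≤ y) :
    cdf γ y - cdf γ x ≤ mG * (y - x) := by
  have h := hγ.measure_le (measurableSet_Ioc (a := x) (b := y))
  rw [← measure_cdf γ, StieltjesFunction.measure_Ioc, Real.volume_Ioc,
    ← ENNReal.ofReal_mul hγ.nonneg] at h
  exact (ENNReal.ofReal_le_ofReal_iff (mul_nonneg hγ.nonneg (sub_nonneg.2 hxy))).1 h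

lemma abs_cdf_sub_cdf_le (hγ : HasBoundedDensity γ mG) (x y : ℝ) :
    |cdf γ x - cdf γ y| ≤ mG * |x - y| := by
  rcases le_total x y with h | h
  · rw [abs_sub_comm, abs_of_nonneg (sub_nonneg.2 ((cdf γ).mono h)), abs_sub_comm,
      abs_of_nonneg (sub_nonneg.2 h)]
    exact hγ.cdf_sub_cdf_le h
  · rw [abs_of_nonneg (sub_nonneg.2 ((cdf γ).mono h)), abs_of_nonneg (sub_nonneg.2 h)]
    exact hγ.cdf_sub_cdf_le h

lemma abs_secondMomentRatio_sub_one_le (hγ : HasBoundedDensity γ mG) {G0 : ℝ}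
    (hG0 : G0 = cdf γ 0) (hc : 0 < G0 * (1 - G0)) (R : ℕ) {φ : ℝ} (hφ : 0 < φ) (u : ℝ) :
    |secondMomentRatio γ G0 R (u / φ) - 1|
      ≤ mG / (φ * (G0 * (1 - G0))) * |u| + R * mG ^ 2 / (φ ^ 2 * (G0 * (1 - G0))) * u ^ 2 := by
  subst hG0
  unfold secondMomentRatio
  set p := cdf γ (u / φ)
  set c := cdf γ 0 * (1 - cdf γ 0)
  have hlip : |p - cdf γ 0| ≤ mG * |u| / φ := by
    simpa [abs_div, abs_of_pos hφ, mul_div_assoc] using hγ.abs_cdf_sub_cdf_le (u / φ) 0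
  have hvar : |p * (1 - p) - c| ≤ |p - cdf γ 0| := abs_mul_one_sub_sub_mul_one_sub_le
    (cdf_nonneg _ _) (cdf_le_one _ _) (cdf_nonneg _ _) (cdf_le_one _ _)
  calc |(p * (1 - p) + R * (p - cdf γ 0) ^ 2) / c - 1|
      = |(p * (1 - p) - c) + R * |p - cdf γ 0| ^ 2| / c := by
        rw [div_sub_one hc.ne', abs_div, abs_of_pos hc, sq_abs]
        ring_nf
    _ ≤ (|p - cdf γ 0| + R * |p - cdf γ 0| ^ 2) / c := by
        gcongr
        exact (abs_add_le _ _).trans (add_le_add hvar (abs_of_nonneg (by positivity)).le)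
    _ ≤ (mG * |u| / φ + R * (mG * |u| / φ) ^ 2) / c := by gcongr
    _ = mG / (φ * c) * |u| + R * mG ^ 2 / (φ ^ 2 * c) * u ^ 2 := by
        rw [div_pow, mul_pow, sq_abs]
        field_simp

end HasBoundedDensity

section SecondMoment

variable {Ω : Type*} [MeasurableSpace Ω] {μ : Measure Ω} [IsProbabilityMeasure μ]

lemma integral_sq_finset_sum_eq {ι : Type*} {X : ι → Ω → ℝ} {s : Finset ι}
    (hX : ∀ i ∈ s, MemLp (X i) 2 μ) (hindep : Set.Pairwise ↑s fun i j => X i ⟂ᵢ[μ] X j) :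
    ∫ ω, (∑ i ∈ s, X i ω) ^ 2 ∂μ = ∑ i ∈ s, Var[X i; μ] + (∑ i ∈ s, μ[X i]) ^ 2 := by
  have hsum := variance_eq_sub (memLp_finsetSum' s hX)
  simp only [IndepFun.variance_sum hX hindep, Pi.pow_apply, Finset.sum_apply] at hsum
  rw [integral_finsetSum s fun i hi => (hX i hi).integrable one_le_two] at hsum
  linarith

lemma variance_indicator_one {A : Set Ω} (hA : MeasurableSet A) :
    Var[A.indicator 1; μ] = μ.real A * (1 - μ.real A) := by
  have hsq : A.indicator (1 : Ω → ℝ) ^ 2 = A.indicator 1 := by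
    ext ω
    by_cases h : ω ∈ A <;> simp [h]
  have hmem : MemLp (A.indicator (1 : Ω → ℝ)) 2 μ :=
    memLp_indicator_const 2 hA 1 (.inr (measure_ne_top μ A))
  rw [variance_eq_sub hmem, hsq, integral_indicator_one hA]
  ring

end SecondMoment

section IndicatorSum

variable {Ω : Type*} [MeasurableSpace Ω] {μ : Measure Ω} {γ : Measure ℝ} [IsProbabilityMeasure γ]

lemma measureReal_preimage_Iic_eq_cdf {X : Ω → ℝ} (hX : Measurable X) (hlaw : μ.map X = γ)
    (t : ℝ) : μ.real (X ⁻¹' Iic t) = cdf γ t := by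
  rw [cdf_eq_real, ← hlaw, map_measureReal_apply hX measurableSet_Iic]

variable [IsProbabilityMeasure μ]

lemma integral_sq_sum_ite_le_sub {ξ : ℕ → Ω → ℝ} (hmeas : ∀ j, Measurable (ξ j))
    (hdist : ∀ j, μ.map (ξ j) = γ) (hindep : iIndepFun ξ μ) (t c : ℝ) (R : ℕ) :
    ∫ ω, (∑ j ∈ Finset.range R, ((if ξ j ω ≤ t then (1 : ℝ) else 0) - c)) ^ 2 ∂μ =
      R * (cdf γ t * (1 - cdf γ t)) + (R * (cdf γ t - c)) ^ 2 := by
  have hA : ∀ j, MeasurableSet (ξ j ⁻¹' Iic t) := fun j => hmeas j measurableSet_Iic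
  have hmem : ∀ j, MemLp ((ξ j ⁻¹' Iic t).indicator (1 : Ω → ℝ)) 2 μ := fun j =>
    memLp_indicator_const 2 (hA j) 1 (.inr (measure_ne_top μ _))
  have hvar : ∀ j, Var[fun ω => (ξ j ⁻¹' Iic t).indicator 1 ω - c; μ] =
      cdf γ t * (1 - cdf γ t) := fun j => by
    rw [variance_sub_const (hmem j).1, variance_indicator_one (hA j),
      measureReal_preimage_Iic_eq_cdf (hmeas j) (hdist j)]
  have hmean : ∀ j, μ[fun ω => (ξ j ⁻¹' Iic t).indicator 1 ω - c] = cdf γ t - c := fun j => by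
    rw [integral_sub ((hmem j).integrable one_le_two) (integrable_const c),
      integral_indicator_one (hA j), measureReal_preimage_Iic_eq_cdf (hmeas j) (hdist j),
      integral_const, probReal_univ, one_smul]
  have hpair : Set.Pairwise ↑(Finset.range R) fun i j =>
      (fun ω => (ξ i ⁻¹' Iic t).indicator 1 ω - c) ⟂ᵢ[μ]
        (fun ω => (ξ j ⁻¹' Iic t).indicator 1 ω - c) := fun i _ j _ hij =>
    (hindep.indepFun hij).comp ((measurable_one.indicator measurableSet_Iic).sub_const c)
      ((measurable_one.indicator measurableSet_Iic).sub_const c)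
  have hite : ∀ j ω, (if ξ j ω ≤ t then (1 : ℝ) else 0) = (ξ j ⁻¹' Iic t).indicator 1 ω :=
    fun j ω => by simp only [indicator, mem_preimage, mem_Iic, Pi.one_apply]
  simp only [hite]
  refine (integral_sq_finset_sum_eq (X := fun j ω => (ξ j ⁻¹' Iic t).indicator 1 ω - c)
    (fun j _ => (hmem j).sub (memLp_const c)) hpair).trans ?_
  simp only [hvar, hmean, Finset.sum_const, Finset.card_range, nsmul_eq_mul]

end IndicatorSum

lemma abs_integral_sub_le_integral {α : Type*} [MeasurableSpace α] {ν : Measure α}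
    [IsProbabilityMeasure ν] {m g : α → ℝ} {c : ℝ} (hm : AEStronglyMeasurable m ν)
    (hg : Integrable g ν) (hmg : ∀ x, |m x - c| ≤ g x) :
    |∫ x, m x ∂ν - c| ≤ ∫ x, g x ∂ν := by
  have hint : Integrable (fun x => m x - c) ν :=
    hg.mono' (hm.sub aestronglyMeasurable_const) (ae_of_all _ hmg)
  have hmi : Integrable m ν := by simpa [sub_eq_add_neg] using hint
  have hsub : ∫ x, (m x - c) ∂ν = ∫ x, m x ∂ν - c := by
    simp [integral_sub hmi (integrable_const c)]
  rw [← hsub]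
  exact abs_integral_le_integral_abs.trans (integral_mono hint.abs hg hmg)

section RandStat

variable {Ω : Type*} [MeasurableSpace Ω] {μ : Measure Ω} [IsProbabilityMeasure μ]
  {γ : Measure ℝ} [IsProbabilityMeasure γ] {ξ : ℕ → Ω → ℝ}

lemma integral_randStat (hmeas : ∀ j, Measurable (ξ j)) (hdist : ∀ j, μ.map (ξ j) = γ)
    (hindep : iIndepFun ξ μ) {G0 : ℝ} (hG0 : 0 ≤ G0) (hG1 : G0 ≤ 1) (F : Measure ℝ)
    [IsFiniteMeasure F] {R : ℕ} (hR : R ≠ 0) (φ : ℝ) :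
    ∫ ω, randStat ξ R G0 F φ ω ∂μ = ∫ u, secondMomentRatio γ G0 R (u / φ) ∂F := by
  have hRc : 0 ≤ (R : ℝ) * (G0 * (1 - G0)) :=
    mul_nonneg R.cast_nonneg (mul_nonneg hG0 (sub_nonneg.2 hG1))
  set S : ℝ → Ω → ℝ := fun u ω =>
    ∑ j ∈ Finset.range R, ((if ξ j ω ≤ u / φ then (1 : ℝ) else 0) - G0) with hS
  have hrand : ∀ ω, randStat ξ R G0 F φ ω = ∫ u, S u ω ^ 2 / (R * (G0 * (1 - G0))) ∂F :=
    fun ω => by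
      simp only [randStat, hS, div_pow, mul_pow, Real.sq_sqrt R.cast_nonneg,
        Real.sq_sqrt (mul_nonneg hG0 (sub_nonneg.2 hG1))]
  have hS_le : ∀ u ω, |S u ω| ≤ R := fun u ω => by
    refine (Finset.abs_sum_le_sum_abs _ _).trans ?_
    refine (Finset.sum_le_card_nsmul _ _ 1 fun j _ => ?_).trans (by simp)
    split_ifs <;> rw [abs_le] <;> constructor <;> linarith
  have hS_meas : Measurable (Function.uncurry S) :=
    Finset.measurable_sum _ fun j _ => Measurable.sub_const (Measurable.ite
      (measurableSet_le ((hmeas j).comp measurable_snd) (measurable_fst.div_const φ))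
      measurable_const measurable_const) G0
  have hint : Integrable (Function.uncurry fun u ω => S u ω ^ 2 / (R * (G0 * (1 - G0))))
      (F.prod μ) := by
    refine Integrable.of_bound ((hS_meas.pow_const 2).div_const _).aestronglyMeasurable
      (R ^ 2 / (R * (G0 * (1 - G0)))) (ae_of_all _ fun ⟨u, ω⟩ => ?_)
    rw [Function.uncurry_apply_pair, Real.norm_eq_abs,
      abs_of_nonneg (div_nonneg (sq_nonneg _) hRc)]
    refine div_le_div_of_nonneg_right (sq_le_sq.2 ?_) hRc
    simpa using hS_le u ω
  rw [integral_congr_ae (ae_of_all _ hrand), ← integral_integral_swap hint]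
  congr 1 with u
  rw [integral_div, integral_sq_sum_ite_le_sub hmeas hdist hindep, secondMomentRatio]
  set p := cdf γ (u / φ)
  rw [show R * (p * (1 - p)) + (R * (p - G0)) ^ 2 = R * (p * (1 - p) + R * (p - G0) ^ 2) by ring,
    mul_div_mul_left _ _ (Nat.cast_ne_zero.2 hR)]

end RandStat

/-- for the randomised statistic `Θ_R` built from i.i.d. `ξ_1, …, ξ_R` with
CDF `G` (having a bounded density, `G(0) ∈ (0,1)`) and a deterministic positive scaling
`φ_R`, there is a finite constant `C₀`, depending only on the density bound of `G`, on
`G(0)`, and on the first two absolute moments of `F`, such that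
`|E(Θ_R) − 1| ≤ C₀ (R φ_R^{-2} + φ_R^{-1})` for every `R` (with at least one draw)
and every `φ_R > 0`. -/
theorem randStat_mean_bound
    {Ω : Type*} [MeasurableSpace Ω] (μ : Measure Ω) [IsProbabilityMeasure μ]
    (γ : Measure ℝ) [IsProbabilityMeasure γ] (mG : ℝ) (hdens : HasBoundedDensity γ mG)
    (G0 : ℝ) (hG0 : G0 = (γ (Set.Iic 0)).toReal) (hG0pos : 0 < G0) (hG0lt : G0 < 1)
    (F : Measure ℝ) [IsProbabilityMeasure F]
    (hF1 : Integrable (fun u : ℝ => |u|) F) (hF2 : Integrable (fun u : ℝ => u ^ 2) F)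
    (ξ : ℕ → Ω → ℝ) (hmeas : ∀ j, Measurable (ξ j))
    (hdist : ∀ j, μ.map (ξ j) = γ)
    (hindep : iIndepFun ξ μ) :
    ∃ C₀ : ℝ, 0 ≤ C₀ ∧ ∀ (φ : ℕ → ℝ), (∀ R, 0 < φ R) → ∀ R : ℕ, 1 ≤ R →
      |(∫ ω, randStat ξ R G0 F (φ R) ω ∂μ) - 1| ≤
        C₀ * ((R : ℝ) / (φ R) ^ 2 + (φ R)⁻¹) := by
  have hc : 0 < G0 * (1 - G0) := mul_pos hG0pos (sub_pos.2 hG0lt)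
  have hG0cdf : G0 = cdf γ 0 := by rw [hG0, cdf_eq_real]; rfl
  have hcdf : Measurable (cdf γ) := (cdf γ).mono.measurable
  have hmG := hdens.nonneg
  set I₁ := ∫ u, |u| ∂F
  set I₂ := ∫ u, u ^ 2 ∂F
  have hI₁ : 0 ≤ I₁ := integral_nonneg fun u => abs_nonneg u
  have hI₂ : 0 ≤ I₂ := integral_nonneg fun u => sq_nonneg u
  refine ⟨(mG * I₁ + mG ^ 2 * I₂) / (G0 * (1 - G0)), by positivity, fun φ hφ R hR => ?_⟩
  rw [integral_randStat hmeas hdist hindep hG0pos.le hG0lt.le F (by omega) (φ R)]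
  refine (abs_integral_sub_le_integral (by unfold secondMomentRatio; fun_prop)
    ((hF1.const_mul _).add (hF2.const_mul _))
    (hdens.abs_secondMomentRatio_sub_one_le hG0cdf hc R (hφ R))).trans ?_
  rw [integral_add' (hF1.const_mul _) (hF2.const_mul _), integral_const_mul, integral_const_mul]
  have hφ₀ := hφ R
  calc mG / (φ R * (G0 * (1 - G0))) * I₁ + R * mG ^ 2 / (φ R ^ 2 * (G0 * (1 - G0))) * I₂
      = mG * I₁ / (G0 * (1 - G0)) * (φ R)⁻¹ + mG ^ 2 * I₂ / (G0 * (1 - G0)) * (R / φ R ^ 2) := by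
        field_simp
    _ ≤ (mG * I₁ + mG ^ 2 * I₂) / (G0 * (1 - G0)) * (φ R)⁻¹ +
        (mG * I₁ + mG ^ 2 * I₂) / (G0 * (1 - G0)) * (R / φ R ^ 2) := by
        gcongr
        · exact le_add_of_nonneg_right (by positivity)
        · exact le_add_of_nonneg_left (by positivity)
    _ = _ := by ring
end

section
/- Let Θ_R be the randomised statistic built from i.i.d. ξ_1,…,ξ_R with CDF G and a deterministic positive scaling φ_R, let δ > 0, suppose ∫|u|^{4+2δ} dF(u) < ∞, and suppose R^{1/2}/φ_R ≤ C for all R. Then sup_R E|Θ_R|^{2+δ} < ∞; i.e. the (2+δ)-th moments of Θ_R are uniformly bounded by a finite constant depending only on δ, C, the density bound of G, G(0), and ∫|u|^{4+2δ}dF(u). -/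
open MeasureTheory Filter ProbabilityTheory

/-!
Write the numerator of `Θ_R` as `A(u) + R (G(u/φ_R) - G(0))`, where `A(u)` is a sum of `R`
independent, centred variables bounded by `1`. The bounded density gives
`R (G(u/φ_R) - G(0))² ≤ m_G² C² u²`, so `Θ_R ≤ X + b` with `X = 2 (R σ²)⁻¹ ∫ A² dF` and
`b = 2 m_G² C² σ⁻² ∫ u² dF`, where `σ² = G(0)(1 - G(0))`. For `n = ⌈2 + δ⌉`, Jensen and Fubini give
`E Xⁿ ≤ (2 / (R σ²))ⁿ sup_u E A(u)²ⁿ`, and `E A(u)²ⁿ ≤ K_n Rⁿ` (induction on `R` through the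
binomial expansion, in which the term linear in the new summand vanishes) makes the bound
uniform in `R`.
-/

open Finset

lemma rpow_le_one_add_rpow {x a b : ℝ} (hx : 0 ≤ x) (ha : 0 ≤ a) (hab : a ≤ b) :
    x ^ a ≤ 1 + x ^ b := by
  rcases le_total x 1 with h1 | h1
  · linarith [Real.rpow_le_one hx h1 ha, Real.rpow_nonneg hx b]
  · linarith [Real.rpow_le_rpow_of_exponent_le h1 hab]

lemma pow_le_one_add_pow {x : ℝ} (hx : 0 ≤ x) {k n : ℕ} (hkn : k ≤ n) : x ^ k ≤ 1 + x ^ n := by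
  exact_mod_cast rpow_le_one_add_rpow hx k.cast_nonneg (Nat.cast_le.mpr hkn)

lemma integrable_pow_of_abs_le {Ω : Type*} [MeasurableSpace Ω] {μ : Measure Ω}
    [IsFiniteMeasure μ] {f : Ω → ℝ} (hf : Measurable f) {B : ℝ} (hB : ∀ ω, |f ω| ≤ B)
    (k : ℕ) : Integrable (fun ω => f ω ^ k) μ :=
  .of_bound (hf.pow_const k).aestronglyMeasurable (B ^ k) <| ae_of_all _ fun ω => by
    simpa only [Real.norm_eq_abs, abs_pow] using pow_le_pow_left₀ (abs_nonneg _) (hB ω) k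

lemma integrable_sq_of_integrable_abs_rpow {μ : Measure ℝ} [IsFiniteMeasure μ] {q : ℝ} (hq : 2 ≤ q)
    (h : Integrable (fun u => |u| ^ q) μ) : Integrable (fun u => u ^ 2) μ := by
  refine ((integrable_const 1).add h).mono' (measurable_id.pow_const 2).aestronglyMeasurable
    (ae_of_all _ fun u => ?_)
  simpa [Real.norm_eq_abs] using rpow_le_one_add_rpow (abs_nonneg u) zero_le_two hq

section MomentBound

variable {Ω : Type*} [MeasurableSpace Ω] {μ : Measure Ω} [IsProbabilityMeasure μ]

lemma abs_integral_pow_le_one_add {f : Ω → ℝ} (hf : Measurable f) {B : ℝ} (hB : ∀ ω, |f ω| ≤ B)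
    {k m : ℕ} (hkm : k ≤ 2 * m) :
    |∫ ω, f ω ^ k ∂μ| ≤ 1 + ∫ ω, f ω ^ (2 * m) ∂μ := by
  calc |∫ ω, f ω ^ k ∂μ| ≤ ∫ ω, |f ω| ^ k ∂μ := by
        simpa only [← abs_pow] using abs_integral_le_integral_abs
    _ ≤ ∫ ω, (1 + f ω ^ (2 * m)) ∂μ := by
        refine integral_mono (integrable_pow_of_abs_le hf.abs (by simpa using hB) k)
          ((integrable_const 1).add (integrable_pow_of_abs_le hf hB _)) fun ω => ?_
        simpa only [(even_two_mul m).pow_abs] using pow_le_one_add_pow (abs_nonneg (f ω)) hkm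
    _ = 1 + ∫ ω, f ω ^ (2 * m) ∂μ := by
        rw [integral_add (integrable_const 1) (integrable_pow_of_abs_le hf hB _)]
        simp

lemma abs_integral_pow_le_one {f : Ω → ℝ} (hf : ∀ ω, |f ω| ≤ 1) (k : ℕ) :
    |∫ ω, f ω ^ k ∂μ| ≤ 1 := by
  have h := norm_integral_le_of_norm_le_const (μ := μ) (f := fun ω => f ω ^ k) (C := 1) <|
    ae_of_all _ fun ω => by
      simpa only [Real.norm_eq_abs, abs_pow] using pow_le_one₀ (abs_nonneg _) (hf ω)
  simpa using h

lemma integral_add_pow_eq_sum_of_indepFun {S Y : Ω → ℝ} (hind : IndepFun S Y μ)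
    (hS : Measurable S) (hY : Measurable Y) {BS BY : ℝ} (hSB : ∀ ω, |S ω| ≤ BS)
    (hYB : ∀ ω, |Y ω| ≤ BY) (N : ℕ) :
    ∫ ω, (S ω + Y ω) ^ N ∂μ =
      ∑ k ∈ range (N + 1), (∫ ω, S ω ^ k ∂μ) * (∫ ω, Y ω ^ (N - k) ∂μ) * N.choose k := by
  simp_rw [add_pow]
  refine (integral_finsetSum _ fun k _ => ?_).trans (sum_congr rfl fun k _ => ?_)
  · refine ((integrable_pow_of_abs_le hS hSB k).mul_bdd (c := BY ^ (N - k))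
      (hY.pow_const _).aestronglyMeasurable (ae_of_all _ fun ω => ?_)).mul_const _
    simpa only [Real.norm_eq_abs, abs_pow] using pow_le_pow_left₀ (abs_nonneg _) (hYB ω) _
  · rw [integral_mul_const]
    congr 1
    exact (hind.comp (measurable_id.pow_const k)
      (measurable_id.pow_const (N - k))).integral_fun_mul_eq_mul_integral
      (hS.pow_const k).aestronglyMeasurable (hY.pow_const _).aestronglyMeasurable

lemma integral_add_pow_le_of_indepFun {S Y : Ω → ℝ} (hind : IndepFun S Y μ)
    (hS : Measurable S) (hY : Measurable Y) {B : ℝ} (hSB : ∀ ω, |S ω| ≤ B)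
    (hY1 : ∀ ω, |Y ω| ≤ 1) (hY0 : ∫ ω, Y ω ∂μ = 0) (m : ℕ) :
    ∫ ω, (S ω + Y ω) ^ (2 * m + 2) ∂μ ≤
      ∫ ω, S ω ^ (2 * m + 2) ∂μ + 4 ^ (m + 1) * (1 + ∫ ω, S ω ^ (2 * m) ∂μ) := by
  set L := 1 + ∫ ω, S ω ^ (2 * m) ∂μ
  have hL : 0 ≤ L := by
    have := integral_nonneg (μ := μ) (f := fun ω => S ω ^ (2 * m)) fun ω =>
      (even_two_mul m).pow_nonneg (S ω)
    positivity
  have hlow : ∀ k ∈ range (2 * m + 1),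
      (∫ ω, S ω ^ k ∂μ) * (∫ ω, Y ω ^ (2 * m + 2 - k) ∂μ) ≤ L := fun k hk =>
    (le_abs_self _).trans <| by
      rw [abs_mul, ← mul_one L]
      exact mul_le_mul (abs_integral_pow_le_one_add hS hSB (by simpa [Nat.lt_succ_iff] using hk))
        (abs_integral_pow_le_one hY1 _) (abs_nonneg _) hL
  have hchoose : ∑ k ∈ range (2 * m + 1), ((2 * m + 2).choose k : ℝ) ≤ 4 ^ (m + 1) :=
    calc ∑ k ∈ range (2 * m + 1), ((2 * m + 2).choose k : ℝ)
        ≤ ∑ k ∈ range (2 * m + 2 + 1), ((2 * m + 2).choose k : ℝ) :=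
          sum_le_sum_of_subset_of_nonneg (range_subset_range.mpr (by omega)) fun _ _ _ => by
            positivity
      _ = 4 ^ (m + 1) := by
          rw [← Nat.cast_sum, Nat.sum_range_choose, show 2 * m + 2 = 2 * (m + 1) by ring, pow_mul]
          norm_num
  -- the top term is `E S^(2m+2)`, the next one vanishes since `E Y = 0`
  rw [integral_add_pow_eq_sum_of_indepFun hind hS hY hSB hY1, sum_range_succ, sum_range_succ]
  simp only [Nat.choose_self, Nat.sub_self, pow_zero, integral_const, probReal_univ,
    show 2 * m + 2 - (2 * m + 1) = 1 by omega, pow_one, hY0, smul_eq_mul, mul_one,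
    Nat.cast_one, mul_zero, zero_mul, add_zero]
  calc _ ≤ L * ∑ k ∈ range (2 * m + 1), ((2 * m + 2).choose k : ℝ) + ∫ ω, S ω ^ (2 * m + 2) ∂μ := by
        rw [mul_sum]; gcongr with k hk; exact hlow k hk
    _ ≤ _ := by linarith [mul_le_mul_of_nonneg_left hchoose hL]

def sumMomentConst : ℕ → ℝ
  | 0 => 1
  | m + 1 => 4 ^ (m + 1) * (1 + sumMomentConst m)

lemma sumMomentConst_nonneg (m : ℕ) : 0 ≤ sumMomentConst m := by
  induction m with
  | zero => norm_num [sumMomentConst]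
  | succ m ih => rw [sumMomentConst]; positivity

lemma sumMomentConst_step (m : ℕ) {x : ℝ} (hx : 0 ≤ x) :
    sumMomentConst (m + 1) * x ^ (m + 1) + 4 ^ (m + 1) * (1 + sumMomentConst m * x ^ m) ≤
      sumMomentConst (m + 1) * (x + 1) ^ (m + 1) := by
  have hK := sumMomentConst_nonneg m
  have h1 : 1 ≤ (x + 1) ^ m := one_le_pow₀ (by linarith)
  have h2 : x ^ m ≤ (x + 1) ^ m := pow_le_pow_left₀ hx (by linarith) m
  have h3 : x ^ (m + 1) ≤ x * (x + 1) ^ m := by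
    rw [pow_succ']; exact mul_le_mul_of_nonneg_left h2 hx
  have h4 : 1 + sumMomentConst m * x ^ m ≤ (1 + sumMomentConst m) * (x + 1) ^ m := by
    nlinarith
  have hA := mul_le_mul_of_nonneg_left h3
    (by positivity : (0 : ℝ) ≤ 4 ^ (m + 1) * (1 + sumMomentConst m))
  have hB := mul_le_mul_of_nonneg_left h4 (by positivity : (0 : ℝ) ≤ 4 ^ (m + 1))
  rw [sumMomentConst]
  linear_combination hA + hB

/-- A Marcinkiewicz–Zygmund type bound. -/
theorem integral_sum_pow_le {Y : ℕ → Ω → ℝ} (hY : ∀ j, Measurable (Y j))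
    (hind : iIndepFun Y μ) (hY1 : ∀ j ω, |Y j ω| ≤ 1) (hY0 : ∀ j, ∫ ω, Y j ω ∂μ = 0)
    (m R : ℕ) :
    ∫ ω, (∑ j ∈ range R, Y j ω) ^ (2 * m) ∂μ ≤ sumMomentConst m * R ^ m := by
  have hS : ∀ R, Measurable fun ω => ∑ j ∈ range R, Y j ω :=
    fun R => Finset.measurable_sum _ fun j _ => hY j
  have hSB : ∀ R ω, |∑ j ∈ range R, Y j ω| ≤ R := fun R ω =>
    (abs_sum_le_sum_abs _ _).trans <| by simpa using sum_le_sum fun j (_ : j ∈ range R) => hY1 j ω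
  induction m generalizing R with
  | zero => simp [sumMomentConst]
  | succ m ihm =>
    induction R with
    | zero => simp
    | succ R ihR =>
      have hindR : IndepFun (fun ω => ∑ j ∈ range R, Y j ω) (Y R) μ := by
        simpa only [← Finset.sum_apply] using
          hind.indepFun_finsetSum_of_notMem hY (notMem_range_self (n := R))
      simp_rw [sum_range_succ, Nat.cast_succ]
      calc ∫ ω, (∑ j ∈ range R, Y j ω + Y R ω) ^ (2 * (m + 1)) ∂μ
          ≤ ∫ ω, (∑ j ∈ range R, Y j ω) ^ (2 * m + 2) ∂μ +
              4 ^ (m + 1) * (1 + ∫ ω, (∑ j ∈ range R, Y j ω) ^ (2 * m) ∂μ) :=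
            integral_add_pow_le_of_indepFun hindR (hS R) (hY R) (hSB R) (hY1 R) (hY0 R) m
        _ ≤ sumMomentConst (m + 1) * R ^ (m + 1) +
              4 ^ (m + 1) * (1 + sumMomentConst m * R ^ m) := by
            gcongr
            exacts [ihR, ihm R]
        _ ≤ sumMomentConst (m + 1) * (R + 1) ^ (m + 1) := sumMomentConst_step m R.cast_nonneg

end MomentBound

section Cdf

variable {γ : Measure ℝ} {mG : ℝ}

lemma HasBoundedDensity.nonneg_s13 (h : HasBoundedDensity γ mG) : 0 ≤ mG := by
  obtain ⟨d, hd, -⟩ := h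
  exact (hd 0).1.trans (hd 0).2

lemma HasBoundedDensity.measure_Ioc_le (h : HasBoundedDensity γ mG) (s t : ℝ) :
    γ (Set.Ioc s t) ≤ ENNReal.ofReal (mG * (t - s)) := by
  obtain ⟨d, hd, rfl⟩ := h
  rw [withDensity_apply _ measurableSet_Ioc]
  calc ∫⁻ x in Set.Ioc s t, ENNReal.ofReal (d x) ≤ ∫⁻ _ in Set.Ioc s t, ENNReal.ofReal mG :=
        lintegral_mono fun x => ENNReal.ofReal_le_ofReal (hd x).2
    _ = ENNReal.ofReal (mG * (t - s)) := by
        rw [setLIntegral_const, Real.volume_Ioc, ← ENNReal.ofReal_mul ((hd 0).1.trans (hd 0).2)]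

lemma HasBoundedDensity.abs_cdf_sub_le [IsProbabilityMeasure γ] (h : HasBoundedDensity γ mG)
    (s t : ℝ) : |cdf γ t - cdf γ s| ≤ mG * |t - s| := by
  wlog hst : s ≤ t generalizing s t
  · simpa only [abs_sub_comm] using this t s (le_of_not_ge hst)
  have hIoc : ENNReal.ofReal (cdf γ t - cdf γ s) ≤ ENNReal.ofReal (mG * (t - s)) := by
    simpa only [← StieltjesFunction.measure_Ioc, measure_cdf] using h.measure_Ioc_le s t
  rw [abs_of_nonneg (sub_nonneg.mpr (monotone_cdf γ hst)), abs_of_nonneg (sub_nonneg.mpr hst)]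
  exact (ENNReal.ofReal_le_ofReal_iff (mul_nonneg h.nonneg_s13 (sub_nonneg.mpr hst))).mp hIoc

lemma integral_ite_le_eq_cdf [IsProbabilityMeasure γ] {Ω : Type*} [MeasurableSpace Ω]
    {μ : Measure Ω} {X : Ω → ℝ} (hX : Measurable X) (hXγ : μ.map X = γ) (t : ℝ) :
    ∫ ω, (if X ω ≤ t then (1 : ℝ) else 0) ∂μ = cdf γ t := by
  have hind : (fun x : ℝ => if x ≤ t then (1 : ℝ) else 0) = (Set.Iic t).indicator 1 := by
    ext x; simp [Set.indicator_apply]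
  rw [cdf_eq_real, ← integral_indicator_one measurableSet_Iic, ← hind, ← hXγ,
    integral_map hX.aemeasurable]
  exact (Measurable.ite measurableSet_Iic measurable_const measurable_const).aestronglyMeasurable

end Cdf

section IteratedIntegral

variable {Ω α : Type*} [MeasurableSpace Ω] [MeasurableSpace α] {μ : Measure Ω}
  [IsFiniteMeasure μ] {ν : Measure α} [IsProbabilityMeasure ν]

lemma integrable_integral_pow_of_le {g : Ω × α → ℝ} (hg : Measurable g)
    (hg0 : ∀ x, 0 ≤ g x) {B : ℝ} (hgB : ∀ x, g x ≤ B) (n : ℕ) :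
    Integrable (fun ω => (∫ a, g (ω, a) ∂ν) ^ n) μ := by
  have hmeas : Measurable fun ω => (∫ a, g (ω, a) ∂ν) ^ n :=
    hg.stronglyMeasurable.integral_prod_right'.measurable.pow_const n
  refine .of_bound hmeas.aestronglyMeasurable (B ^ n) (ae_of_all _ fun ω => ?_)
  have h0 : 0 ≤ ∫ a, g (ω, a) ∂ν := integral_nonneg fun a => hg0 _
  have hB : ∫ a, g (ω, a) ∂ν ≤ B := by
    simpa using integral_mono_of_nonneg (μ := ν) (ae_of_all _ fun a => hg0 (ω, a))
      (integrable_const B) (ae_of_all _ fun a => hgB (ω, a))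
  rw [Real.norm_eq_abs, abs_pow, abs_of_nonneg h0]
  exact pow_le_pow_left₀ h0 hB n

/-- Jensen's inequality in `a`, then Fubini. -/
lemma integral_integral_pow_le {g : Ω × α → ℝ} (hg : Measurable g)
    (hg0 : ∀ x, 0 ≤ g x) {B : ℝ} (hgB : ∀ x, g x ≤ B) (n : ℕ) {M : ℝ}
    (hM : ∀ a, ∫ ω, g (ω, a) ^ n ∂μ ≤ M) :
    ∫ ω, (∫ a, g (ω, a) ∂ν) ^ n ∂μ ≤ M := by
  have hgn0 : ∀ x, 0 ≤ g x ^ n := fun x => pow_nonneg (hg0 x) n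
  have hgnB : ∀ x, g x ^ n ≤ B ^ n := fun x => pow_le_pow_left₀ (hg0 x) (hgB x) n
  have habs : ∀ x, |g x| ≤ B := fun x => (abs_of_nonneg (hg0 x)).trans_le (hgB x)
  have hint : ∀ ω k, Integrable (fun a => g (ω, a) ^ k) ν := fun ω k =>
    integrable_pow_of_abs_le (hg.comp measurable_prodMk_left) (fun a => habs (ω, a)) k
  have hjensen : ∀ ω, (∫ a, g (ω, a) ∂ν) ^ n ≤ ∫ a, g (ω, a) ^ n ∂ν := fun ω =>
    (convexOn_pow n).map_integral_le (continuous_pow n).continuousOn isClosed_Ici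
      (ae_of_all _ fun a => Set.mem_Ici.mpr (hg0 _)) (by simpa using hint ω 1) (hint ω n)
  calc ∫ ω, (∫ a, g (ω, a) ∂ν) ^ n ∂μ ≤ ∫ ω, ∫ a, g (ω, a) ^ n ∂ν ∂μ :=
        integral_mono (integrable_integral_pow_of_le hg hg0 hgB n)
          (by simpa using integrable_integral_pow_of_le (hg.pow_const n) hgn0 hgnB 1) hjensen
    _ = ∫ a, ∫ ω, g (ω, a) ^ n ∂μ ∂ν :=
        integral_integral_swap <| integrable_pow_of_abs_le (μ := μ.prod ν) hg habs n
    _ ≤ ∫ _, M ∂ν := integral_mono_of_nonneg (ae_of_all _ fun a => integral_nonneg fun ω => hgn0 _)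
          (integrable_const M) (ae_of_all _ hM)
    _ = M := by simp

end IteratedIntegral

lemma integral_abs_rpow_le_of_abs_le_add {Ω : Type*} [MeasurableSpace Ω] {μ : Measure Ω}
    [IsProbabilityMeasure μ] {Θ X : Ω → ℝ} {b p : ℝ} {n : ℕ} (hX0 : ∀ ω, 0 ≤ X ω) (hb : 0 ≤ b)
    (hΘ : ∀ ω, |Θ ω| ≤ X ω + b) (hp : 0 ≤ p) (hpn : p ≤ n)
    (hXn : Integrable (fun ω => X ω ^ n) μ) :
    ∫ ω, |Θ ω| ^ p ∂μ ≤ 1 + 2 ^ (n - 1) * (∫ ω, X ω ^ n ∂μ + b ^ n) := by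
  have hpt : ∀ ω, |Θ ω| ^ p ≤ 1 + 2 ^ (n - 1) * (X ω ^ n + b ^ n) := fun ω =>
    calc |Θ ω| ^ p ≤ 1 + |Θ ω| ^ n := by
          simpa using rpow_le_one_add_rpow (abs_nonneg (Θ ω)) hp hpn
      _ ≤ 1 + (X ω + b) ^ n := by gcongr; exact hΘ ω
      _ ≤ 1 + 2 ^ (n - 1) * (X ω ^ n + b ^ n) := by gcongr; exact add_pow_le (hX0 ω) hb n
  have hXb : Integrable (fun ω => X ω ^ n + b ^ n) μ := hXn.add (integrable_const _)
  have hmaj : Integrable (fun ω => 1 + 2 ^ (n - 1) * (X ω ^ n + b ^ n)) μ :=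
    (integrable_const 1).add (hXb.const_mul _)
  calc ∫ ω, |Θ ω| ^ p ∂μ ≤ ∫ ω, 1 + 2 ^ (n - 1) * (X ω ^ n + b ^ n) ∂μ :=
        integral_mono_of_nonneg (ae_of_all _ fun ω => by positivity) hmaj (ae_of_all _ hpt)
    _ = 1 + 2 ^ (n - 1) * (∫ ω, X ω ^ n ∂μ + b ^ n) := by
        rw [integral_add (integrable_const 1) (hXb.const_mul _),
          integral_const_mul, integral_add hXn (integrable_const _)]
        simp

section CenteredCount

lemma abs_ite_one_zero_sub_le (p : Prop) [Decidable p] {c : ℝ} (hc0 : 0 ≤ c) (hc1 : c ≤ 1) :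
    |(if p then (1 : ℝ) else 0) - c| ≤ 1 := by
  split_ifs <;> rw [abs_le] <;> constructor <;> linarith

variable {Ω : Type*}

/-- The numerator of `randStat` is `centeredCount ξ R G0 (u / φ)`. -/
noncomputable def centeredCount (ξ : ℕ → Ω → ℝ) (R : ℕ) (c t : ℝ) (ω : Ω) : ℝ :=
  ∑ j ∈ range R, ((if ξ j ω ≤ t then (1 : ℝ) else 0) - c)

variable {ξ : ℕ → Ω → ℝ} {R : ℕ}

lemma centeredCount_eq_add (c c' t : ℝ) (ω : Ω) :
    centeredCount ξ R c t ω = centeredCount ξ R c' t ω + R * (c' - c) := by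
  simp only [centeredCount, sum_sub_distrib, sum_const, card_range, nsmul_eq_mul]
  ring

lemma abs_centeredCount_le {c : ℝ} (hc0 : 0 ≤ c) (hc1 : c ≤ 1) (t : ℝ) (ω : Ω) :
    |centeredCount ξ R c t ω| ≤ R := by
  refine (abs_sum_le_sum_abs _ _).trans ?_
  simpa using sum_le_sum fun j (_ : j ∈ range R) => abs_ite_one_zero_sub_le (ξ j ω ≤ t) hc0 hc1

lemma sq_centeredCount_le {c : ℝ} (hc0 : 0 ≤ c) (hc1 : c ≤ 1) (t : ℝ) (ω : Ω) :
    centeredCount ξ R c t ω ^ 2 ≤ R ^ 2 :=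
  sq_le_sq' (abs_le.mp (abs_centeredCount_le hc0 hc1 t ω)).1
    (abs_le.mp (abs_centeredCount_le hc0 hc1 t ω)).2

/-- `Θ_R` recentred at the true distribution function, without its normalisation. -/
noncomputable def centeredStat (ξ : ℕ → Ω → ℝ) (R : ℕ) (γ F : Measure ℝ) (φ : ℝ) (ω : Ω) : ℝ :=
  ∫ u, centeredCount ξ R (cdf γ (u / φ)) (u / φ) ω ^ 2 ∂F

lemma centeredStat_nonneg (γ F : Measure ℝ) (φ : ℝ) (ω : Ω) : 0 ≤ centeredStat ξ R γ F φ ω :=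
  integral_nonneg fun _ => sq_nonneg _

variable [MeasurableSpace Ω]

lemma measurable_centeredCount {β : Type*} [MeasurableSpace β] (hξ : ∀ j, Measurable (ξ j))
    {c t : β → ℝ} (hc : Measurable c) (ht : Measurable t) :
    Measurable fun x : Ω × β => centeredCount ξ R (c x.2) (t x.2) x.1 :=
  Finset.measurable_sum _ fun j _ =>
    (Measurable.ite (measurableSet_le ((hξ j).comp measurable_fst) (ht.comp measurable_snd))
      measurable_const measurable_const).sub (hc.comp measurable_snd)

lemma integral_centeredCount_cdf_pow_le {μ : Measure Ω} [IsProbabilityMeasure μ]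
    {γ : Measure ℝ} [IsProbabilityMeasure γ] (hξ : ∀ j, Measurable (ξ j))
    (hlaw : ∀ j, μ.map (ξ j) = γ) (hind : iIndepFun ξ μ) (t : ℝ) (m : ℕ) :
    ∫ ω, centeredCount ξ R (cdf γ t) t ω ^ (2 * m) ∂μ ≤ sumMomentConst m * R ^ m := by
  have hψ : Measurable fun x : ℝ => (if x ≤ t then (1 : ℝ) else 0) - cdf γ t :=
    (Measurable.ite measurableSet_Iic measurable_const measurable_const).sub measurable_const
  refine integral_sum_pow_le (fun j => hψ.comp (hξ j)) (hind.comp _ fun _ => hψ)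
    (fun j ω => abs_ite_one_zero_sub_le _ (cdf_nonneg γ t) (cdf_le_one γ t)) (fun j => ?_) m R
  have hint : Integrable (fun ω => if ξ j ω ≤ t then (1 : ℝ) else 0) μ :=
    .of_bound (Measurable.ite (measurableSet_le (hξ j) measurable_const) measurable_const
      measurable_const).aestronglyMeasurable 1 (ae_of_all _ fun ω => by split_ifs <;> simp)
  simp only [Function.comp_apply]
  rw [integral_sub hint (integrable_const _), integral_ite_le_eq_cdf (hξ j) (hlaw j)]
  simp

lemma measurable_centeredCount_cdf_sq {γ : Measure ℝ} (hξ : ∀ j, Measurable (ξ j)) (φ : ℝ) :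
    Measurable fun x : Ω × ℝ => centeredCount ξ R (cdf γ (x.2 / φ)) (x.2 / φ) x.1 ^ 2 :=
  (measurable_centeredCount hξ ((monotone_cdf γ).measurable.comp (measurable_id.div_const φ))
    (measurable_id.div_const φ)).pow_const 2

lemma integrable_centeredStat_pow {μ : Measure Ω} [IsFiniteMeasure μ] {γ F : Measure ℝ}
    [IsProbabilityMeasure F] (hξ : ∀ j, Measurable (ξ j)) (φ : ℝ) (n : ℕ) :
    Integrable (fun ω => centeredStat ξ R γ F φ ω ^ n) μ :=
  integrable_integral_pow_of_le (measurable_centeredCount_cdf_sq hξ φ) (fun _ => sq_nonneg _)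
    (fun _ => sq_centeredCount_le (cdf_nonneg γ _) (cdf_le_one γ _) _ _) n

lemma integral_centeredStat_pow_le {μ : Measure Ω} [IsProbabilityMeasure μ] {γ F : Measure ℝ}
    [IsProbabilityMeasure γ] [IsProbabilityMeasure F] (hξ : ∀ j, Measurable (ξ j))
    (hlaw : ∀ j, μ.map (ξ j) = γ) (hind : iIndepFun ξ μ) (φ : ℝ) (n : ℕ) :
    ∫ ω, centeredStat ξ R γ F φ ω ^ n ∂μ ≤ sumMomentConst n * R ^ n :=
  integral_integral_pow_le (measurable_centeredCount_cdf_sq hξ φ) (fun _ => sq_nonneg _)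
    (fun _ => sq_centeredCount_le (cdf_nonneg γ _) (cdf_le_one γ _) _ _) n fun u => by
      simpa only [← pow_mul] using integral_centeredCount_cdf_pow_le hξ hlaw hind (u / φ) n

end CenteredCount

section RandStat

variable {Ω : Type*} {ξ : ℕ → Ω → ℝ} {R : ℕ}

lemma randStat_nonneg (G0 : ℝ) (F : Measure ℝ) (φ : ℝ) (ω : Ω) : 0 ≤ randStat ξ R G0 F φ ω :=
  integral_nonneg fun _ => sq_nonneg _

lemma randStat_eq {G0 : ℝ} (hσ : 0 ≤ G0 * (1 - G0)) (F : Measure ℝ) (φ : ℝ) (ω : Ω) :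
    randStat ξ R G0 F φ ω =
      ∫ u, centeredCount ξ R G0 (u / φ) ω ^ 2 / (R * (G0 * (1 - G0))) ∂F := by
  simp only [randStat, centeredCount, div_pow, mul_pow, Real.sq_sqrt R.cast_nonneg,
    Real.sq_sqrt hσ]

lemma HasBoundedDensity.centeredCount_sq_le {γ : Measure ℝ} [IsProbabilityMeasure γ] {mG : ℝ}
    (hdens : HasBoundedDensity γ mG) {φ C : ℝ} (hφ : 0 < φ) (hC : √R / φ ≤ C) (u : ℝ) (ω : Ω) :
    centeredCount ξ R (cdf γ 0) (u / φ) ω ^ 2 ≤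
      2 * centeredCount ξ R (cdf γ (u / φ)) (u / φ) ω ^ 2 + 2 * R * (mG * C * u) ^ 2 := by
  set e := cdf γ (u / φ) - cdf γ 0
  have hdev : |√R * e| ≤ |mG * C * u| :=
    calc |√R * e| ≤ √R * (mG * |u / φ - 0|) := by
          rw [abs_mul, abs_of_nonneg (Real.sqrt_nonneg _)]
          exact mul_le_mul_of_nonneg_left (hdens.abs_cdf_sub_le _ _) (Real.sqrt_nonneg _)
      _ = mG * |u| * (√R / φ) := by rw [sub_zero, abs_div, abs_of_pos hφ]; ring
      _ ≤ mG * |u| * C := by gcongr; exact mul_nonneg hdens.nonneg_s13 (abs_nonneg u)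
      _ = mG * C * |u| := by ring
      _ ≤ |mG * C * u| := by
          rw [abs_mul]; exact mul_le_mul_of_nonneg_right (le_abs_self _) (abs_nonneg u)
  have hsq : (R * e) ^ 2 = R * (√R * e) ^ 2 := by
    rw [mul_pow √R, Real.sq_sqrt R.cast_nonneg]; ring
  rw [centeredCount_eq_add _ (cdf γ (u / φ))]
  calc _ ≤ 2 * (centeredCount ξ R (cdf γ (u / φ)) (u / φ) ω ^ 2 + (R * e) ^ 2) := add_sq_le
    _ ≤ _ := by
      have := mul_le_mul_of_nonneg_left (sq_le_sq.mpr hdev) R.cast_nonneg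
      rw [hsq]
      linarith

lemma HasBoundedDensity.randStat_le [MeasurableSpace Ω] {γ : Measure ℝ} [IsProbabilityMeasure γ]
    {mG : ℝ} (hdens : HasBoundedDensity γ mG) {G0 : ℝ} (hG0 : G0 = cdf γ 0)
    (hσ : 0 < G0 * (1 - G0)) {F : Measure ℝ} [IsProbabilityMeasure F]
    (hF2 : Integrable (fun u => u ^ 2) F) (hξ : ∀ j, Measurable (ξ j)) (hR : 0 < R) {φ C : ℝ}
    (hφ : 0 < φ) (hC : √R / φ ≤ C) (ω : Ω) :
    randStat ξ R G0 F φ ω ≤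
      2 / (R * (G0 * (1 - G0))) * centeredStat ξ R γ F φ ω +
        2 * (mG * C) ^ 2 / (G0 * (1 - G0)) * ∫ u, u ^ 2 ∂F := by
  set σ := G0 * (1 - G0)
  have hmeas : ∀ {c : ℝ → ℝ}, Measurable c →
      Measurable fun u => centeredCount ξ R (c u) (u / φ) ω := fun hc =>
    (measurable_centeredCount hξ hc (measurable_id.div_const φ)).comp measurable_prodMk_left
  have hA : Integrable (fun u => centeredCount ξ R (cdf γ (u / φ)) (u / φ) ω ^ 2) F :=
    integrable_pow_of_abs_le (hmeas ((monotone_cdf γ).measurable.comp (measurable_id.div_const φ)))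
      (fun u => abs_centeredCount_le (cdf_nonneg γ _) (cdf_le_one γ _) _ ω) 2
  have hG0' : Integrable (fun u => centeredCount ξ R G0 (u / φ) ω ^ 2) F :=
    integrable_pow_of_abs_le (hmeas measurable_const) (fun u => abs_centeredCount_le
      (hG0 ▸ cdf_nonneg γ 0) (hG0 ▸ cdf_le_one γ 0) _ ω) 2
  rw [randStat_eq hσ.le, centeredStat, ← integral_const_mul, ← integral_const_mul,
    ← integral_add (hA.const_mul _) (hF2.const_mul _)]
  refine integral_mono (hG0'.div_const _) ((hA.const_mul _).add (hF2.const_mul _)) fun u => ?_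
  have hsq := hG0 ▸ hdens.centeredCount_sq_le (ξ := ξ) hφ hC u ω
  calc centeredCount ξ R G0 (u / φ) ω ^ 2 / (R * σ)
      ≤ (2 * centeredCount ξ R (cdf γ (u / φ)) (u / φ) ω ^ 2 + 2 * R * (mG * C * u) ^ 2) /
          (R * σ) := by gcongr
    _ = _ := by field_simp

end RandStat

/-- for the randomised statistic `Θ_R` built from i.i.d. `ξ_1, …, ξ_R` with CDF
`G` (having a bounded density, `G(0) ∈ (0,1)`) and a deterministic positive scaling `φ_R`, if
`δ > 0`, `∫|u|^{4+2δ} dF(u) < ∞` and `R^{1/2}/φ_R ≤ C` for all `R`, then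
`sup_R E|Θ_R|^{2+δ} < ∞`: the `(2+δ)`-th moments of `Θ_R` are uniformly bounded by a finite
constant (depending only on `δ`, `C`, the density bound of `G`, `G(0)` and
`∫|u|^{4+2δ} dF(u)`). -/
theorem randStat_uniform_moment_bound
    {Ω : Type*} [MeasurableSpace Ω] (μ : Measure Ω) [IsProbabilityMeasure μ]
    (γ : Measure ℝ) [IsProbabilityMeasure γ] (mG : ℝ) (hdens : HasBoundedDensity γ mG)
    (G0 : ℝ) (hG0 : G0 = (γ (Set.Iic 0)).toReal) (hG0pos : 0 < G0) (hG0lt : G0 < 1)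
    (F : Measure ℝ) [IsProbabilityMeasure F]
    (δ : ℝ) (hδ : 0 < δ)
    (hF : Integrable (fun u : ℝ => |u| ^ ((4 : ℝ) + 2 * δ)) F)
    (φ : ℕ → ℝ) (hφpos : ∀ R, 0 < φ R)
    (C : ℝ) (hφC : ∀ R : ℕ, Real.sqrt R / φ R ≤ C)
    (ξ : ℕ → Ω → ℝ) (hmeas : ∀ j, Measurable (ξ j))
    (hdist : ∀ j, μ.map (ξ j) = γ)
    (hindep : iIndepFun ξ μ) :
    ∃ M : ℝ, ∀ R : ℕ, 1 ≤ R →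
      (∫ ω, |randStat ξ R G0 F (φ R) ω| ^ ((2 : ℝ) + δ) ∂μ) ≤ M := by
  set σ := G0 * (1 - G0)
  have hσ : 0 < σ := mul_pos hG0pos (sub_pos.mpr hG0lt)
  have hG0cdf : G0 = cdf γ 0 := by rw [hG0, cdf_eq_real, measureReal_def]
  have hF2 : Integrable (fun u => u ^ 2) F := integrable_sq_of_integrable_abs_rpow (by linarith) hF
  set n := ⌈(2 : ℝ) + δ⌉₊
  set b := 2 * (mG * C) ^ 2 / σ * ∫ u, u ^ 2 ∂F
  have hb : 0 ≤ b := by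
    have := integral_nonneg (μ := F) (f := fun u => u ^ 2) fun u => sq_nonneg u
    positivity
  refine ⟨1 + 2 ^ (n - 1) * ((2 / σ) ^ n * sumMomentConst n + b ^ n), fun R hR => ?_⟩
  have hX : ∫ ω, (2 / (R * σ) * centeredStat ξ R γ F (φ R) ω) ^ n ∂μ ≤
      (2 / σ) ^ n * sumMomentConst n := by
    simp only [mul_pow, integral_const_mul]
    calc (2 / (R * σ)) ^ n * ∫ ω, centeredStat ξ R γ F (φ R) ω ^ n ∂μ
        ≤ (2 / (R * σ)) ^ n * (sumMomentConst n * R ^ n) := by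
          gcongr; exact integral_centeredStat_pow_le hmeas hdist hindep _ n
      _ = (2 / (R * σ) * R) ^ n * sumMomentConst n := by ring
      _ = (2 / σ) ^ n * sumMomentConst n := by rw [show 2 / (R * σ) * R = 2 / σ by field_simp]
  refine (integral_abs_rpow_le_of_abs_le_add
    (X := fun ω => 2 / (R * σ) * centeredStat ξ R γ F (φ R) ω)
    (fun ω => mul_nonneg (by positivity) (centeredStat_nonneg _ _ _ _)) hb (fun ω => ?_)
    (by positivity) (Nat.le_ceil _) ?_).trans (by gcongr)
  · rw [abs_of_nonneg (randStat_nonneg _ _ _ _)]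
    exact hdens.randStat_le hG0cdf hσ hF2 hmeas hR (hφpos R) (hφC R) ω
  · simpa only [mul_pow] using (integrable_centeredStat_pow hmeas _ n).const_mul _
end
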